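/- arXiv:1305.4468 — 2 statements merged into one kernel-verified Lean document; each statement's English description precedes it below -/
import Mathlib

section
/- Suppose ψ⁰(t) = Σ(t)x⁰(t) + β⁰(t) for all t ∈ [0,T], where x⁰ solves ẋ⁰ = A(t)x⁰ + b(t) + B(t)u⁰(t) and ψ⁰ solves ψ̇⁰ = −A*(t)ψ⁰ − H(t)x⁰ − F(t) − E*(t)u⁰(t), ψ⁰(T) = M x⁰(T) + N, with Σ and β⁰ differentiable. If this representation holds for a family of controls whose states x⁰(t) span ℝⁿ at each t, then Σ and β⁰ satisfy: Σ̇(t) + A*(t)Σ(t) + Σ(t)A(t) + H(t) = 0 with Σ(T) = M, and β̇⁰(t) + A*(t)β⁰(t) + Σ(t)b(t) + F(t) + (Σ(t)B(t) + E*(t))u⁰(t) = 0 with β⁰(T) = N. -/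
/-!
Differentiate the representation `ψᵢ = Σ xᵢ + β` along each trajectory and substitute the state
and adjoint equations: at every time `t` the affine map
`v ↦ (Σ̇ + A*Σ + ΣA + H) v + (β̇ + A*β + Σb + F + (ΣB + E*)u⁰)` vanishes at all the states `xᵢ(t)`.
Since these affinely span `ℝⁿ`, the map vanishes identically, so its linear part and its constant
term are both zero. The terminal conditions follow in the same way from
`(Σ(T) - M) xᵢ(T) + (β(T) - N) = 0`.
-/

open Set Matrix

theorem Matrix.eq_zero_and_eq_zero_of_affineSpan_eq_top {k m n ι : Type*} [CommRing k]
    [Fintype n] (P : Matrix m n k) (q : m → k) (y : ι → n → k)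
    (hspan : affineSpan k (range y) = ⊤) (h : ∀ i, P *ᵥ y i + q = 0) : P = 0 ∧ q = 0 := by
  have hzero : P.mulVecLin.toAffineMap + AffineMap.const k (n → k) q = 0 :=
    AffineMap.ext_on hspan <| by rintro - ⟨i, rfl⟩; simpa using h i
  have hv (v : n → k) : P *ᵥ v + q = 0 := by simpa using congrArg (· v) hzero
  have hq : q = 0 := by simpa using hv 0
  exact ⟨ext_iff_mulVec.2 fun v => by simpa [hq] using hv v, hq⟩

theorem Matrix.mulVec_eq_sum_smul_mulVec_single {R m n : Type*} [CommSemiring R] [Fintype n]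
    [DecidableEq n] (P : Matrix m n R) (v : n → R) :
    P *ᵥ v = ∑ j, v j • (P *ᵥ Pi.single j 1) := by
  ext i
  simp [Finset.sum_apply, mulVec, dotProduct, mul_comm]

theorem HasDerivAt.matrix_mulVec {𝕜 m n : Type*} [NontriviallyNormedField 𝕜] [Fintype m]
    [Fintype n] {S : 𝕜 → Matrix m n 𝕜} {S' : Matrix m n 𝕜} {x : 𝕜 → n → 𝕜} {x' : n → 𝕜}
    {t : 𝕜} (hS : ∀ v, HasDerivAt (fun τ => S τ *ᵥ v) (S' *ᵥ v) t) (hx : HasDerivAt x x' t) :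
    HasDerivAt (fun τ => S τ *ᵥ x τ) (S' *ᵥ x t + S t *ᵥ x') t := by
  classical
  rw [funext fun τ => mulVec_eq_sum_smul_mulVec_single (S τ) (x τ),
    mulVec_eq_sum_smul_mulVec_single S', mulVec_eq_sum_smul_mulVec_single (S t),
    ← Finset.sum_add_distrib]
  exact HasDerivAt.fun_sum fun j _ => (hasDerivAt_pi.1 hx j).smul (hS (Pi.single j 1))

theorem UniqueDiffWithinAt.eq_of_hasDerivAt_of_eqOn {𝕜 F : Type*} [NontriviallyNormedField 𝕜]
    [NormedAddCommGroup F] [NormedSpace 𝕜 F] {f g : 𝕜 → F} {f' g' : F} {s : Set 𝕜} {t : 𝕜}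
    (hs : UniqueDiffWithinAt 𝕜 s t) (ht : t ∈ s) (hfg : EqOn f g s)
    (hf : HasDerivAt f f' t) (hg : HasDerivAt g g' t) : f' = g' :=
  hs.eq_deriv _ (hf.hasDerivWithinAt.congr_of_mem hfg.symm ht) hg.hasDerivWithinAt

theorem stmt12_general (n dd : ℕ) (T : ℝ) (hT : 0 < T)
    (A Hm : ℝ → Matrix (Fin n) (Fin n) ℝ) (B : ℝ → Matrix (Fin n) (Fin dd) ℝ)
    (E : ℝ → Matrix (Fin dd) (Fin n) ℝ)
    (b F : ℝ → Fin n → ℝ)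
    (M : Matrix (Fin n) (Fin n) ℝ) (N : Fin n → ℝ)
    (u0 : ℝ → Fin dd → ℝ)
    -- the family of trajectories and adjoints, indexed by `ι`
    {ι : Type*} (x ψ : ι → ℝ → Fin n → ℝ)
    (hx : ∀ i, ∀ t ∈ Icc (0:ℝ) T,
      HasDerivAt (x i) (A t *ᵥ x i t + b t + B t *ᵥ u0 t) t)
    (hψ : ∀ i, ∀ t ∈ Icc (0:ℝ) T,
      HasDerivAt (ψ i) (-((A t)ᵀ *ᵥ ψ i t + Hm t *ᵥ x i t + F t + (E t)ᵀ *ᵥ u0 t)) t)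
    (hψT : ∀ i, ψ i T = M *ᵥ x i T + N)
    -- the affine representation `ψᵢ(t) = Σ(t) xᵢ(t) + β(t)` with `Σ, β` differentiable
    (S S' : ℝ → Matrix (Fin n) (Fin n) ℝ) (β β' : ℝ → Fin n → ℝ)
    (hS : ∀ t ∈ Icc (0:ℝ) T, ∀ v : Fin n → ℝ, HasDerivAt (fun τ => S τ *ᵥ v) (S' t *ᵥ v) t)
    (hβ : ∀ t ∈ Icc (0:ℝ) T, HasDerivAt β (β' t) t)
    (hrep : ∀ i, ∀ t ∈ Icc (0:ℝ) T, ψ i t = S t *ᵥ x i t + β t)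
    -- the states affinely span `ℝⁿ` at each time
    (hspan : ∀ t ∈ Icc (0:ℝ) T,
      affineSpan ℝ (Set.range fun i => x i t) = ⊤) :
    (∀ t ∈ Icc (0:ℝ) T, S' t + (A t)ᵀ * S t + S t * A t + Hm t = 0) ∧
    S T = M ∧
    (∀ t ∈ Icc (0:ℝ) T,
      β' t + (A t)ᵀ *ᵥ β t + S t *ᵥ b t + F t + (S t * B t + (E t)ᵀ) *ᵥ u0 t = 0) ∧
    β T = N := by
  have hend : T ∈ Icc (0:ℝ) T := right_mem_Icc.2 hT.le
  have hterm : S T - M = 0 ∧ β T - N = 0 :=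
    eq_zero_and_eq_zero_of_affineSpan_eq_top _ _ _ (hspan T hend) fun i => by
      rw [sub_mulVec]
      linear_combination (hrep i T hend).symm.trans (hψT i)
  have hode : ∀ t ∈ Icc (0:ℝ) T, S' t + (A t)ᵀ * S t + S t * A t + Hm t = 0 ∧
      β' t + (A t)ᵀ *ᵥ β t + S t *ᵥ b t + F t + (S t * B t + (E t)ᵀ) *ᵥ u0 t = 0 :=
    fun t ht => eq_zero_and_eq_zero_of_affineSpan_eq_top _ _ _ (hspan t ht) fun i => by
      have hderiv := (uniqueDiffOn_Icc hT t ht).eq_of_hasDerivAt_of_eqOn ht (hrep i) (hψ i t ht)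
        ((HasDerivAt.matrix_mulVec (hS t ht) (hx i t ht)).add (hβ t ht))
      rw [hrep i t ht] at hderiv
      simp only [add_mulVec, mulVec_add, ← mulVec_mulVec] at hderiv ⊢
      linear_combination -hderiv
  exact ⟨fun t ht => (hode t ht).1, sub_eq_zero.1 hterm.1, fun t ht => (hode t ht).2,
    sub_eq_zero.1 hterm.2⟩

/-- Riccati-type equations from the affine representation `ψ = Σ x + β` of the
adjoint. If the representation `ψᵢ(t) = Σ(t)xᵢ(t) + β(t)` holds for a family of trajectories
(driven by the control `u⁰`) whose states affinely span `ℝⁿ` at each `t`, with `Σ, β`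
differentiable, then `Σ̇ + A*Σ + ΣA + H = 0, Σ(T) = M` and
`β̇ + A*β + Σb + F + (ΣB + E*)u⁰ = 0, β(T) = N`. -/
theorem stmt12 (n dd : ℕ) (T : ℝ) (hT : 0 < T)
    (A Hm : ℝ → Matrix (Fin n) (Fin n) ℝ) (B : ℝ → Matrix (Fin n) (Fin dd) ℝ)
    (E : ℝ → Matrix (Fin dd) (Fin n) ℝ)
    (b F : ℝ → Fin n → ℝ)
    (M : Matrix (Fin n) (Fin n) ℝ) (N : Fin n → ℝ)
    (hHsymm : ∀ t, (Hm t).IsSymm) (hHpos : ∀ t, (Hm t).PosSemidef)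
    (hMsymm : M.IsSymm) (hMpos : M.PosSemidef)
    (u0 : ℝ → Fin dd → ℝ)
    -- the family of trajectories and adjoints, indexed by `ι`
    {ι : Type*} (x ψ : ι → ℝ → Fin n → ℝ)
    (hx : ∀ i, ∀ t ∈ Icc (0:ℝ) T,
      HasDerivAt (x i) (A t *ᵥ x i t + b t + B t *ᵥ u0 t) t)
    (hψ : ∀ i, ∀ t ∈ Icc (0:ℝ) T,
      HasDerivAt (ψ i) (-((A t)ᵀ *ᵥ ψ i t + Hm t *ᵥ x i t + F t + (E t)ᵀ *ᵥ u0 t)) t)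
    (hψT : ∀ i, ψ i T = M *ᵥ x i T + N)
    -- the affine representation `ψᵢ(t) = Σ(t) xᵢ(t) + β(t)` with `Σ, β` differentiable
    (S S' : ℝ → Matrix (Fin n) (Fin n) ℝ) (β β' : ℝ → Fin n → ℝ)
    (hS : ∀ t ∈ Icc (0:ℝ) T, ∀ v : Fin n → ℝ, HasDerivAt (fun τ => S τ *ᵥ v) (S' t *ᵥ v) t)
    (hβ : ∀ t ∈ Icc (0:ℝ) T, HasDerivAt β (β' t) t)
    (hrep : ∀ i, ∀ t ∈ Icc (0:ℝ) T, ψ i t = S t *ᵥ x i t + β t)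
    -- the states affinely span `ℝⁿ` at each time
    (hspan : ∀ t ∈ Icc (0:ℝ) T,
      affineSpan ℝ (Set.range fun i => x i t) = ⊤) :
    (∀ t ∈ Icc (0:ℝ) T, S' t + (A t)ᵀ * S t + S t * A t + Hm t = 0) ∧
    S T = M ∧
    (∀ t ∈ Icc (0:ℝ) T,
      β' t + (A t)ᵀ *ᵥ β t + S t *ᵥ b t + F t + (S t * B t + (E t)ᵀ) *ᵥ u0 t = 0) ∧
    β T = N :=
  stmt12_general n dd T hT A Hm B E b F M N u0 x ψ hx hψ hψT S S' β β' hS hβ hrep hspan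
end

section
/- Discrete-time sufficiency: with the discrete Hamiltonian H(k,x,ψ,u) := ⟨f(k,x,u), ψ⟩ + ℓ(k,x,u), suppose (x,u) ↦ H(k,x,ψ⁰(k+1),u) is convex for each k, φ is convex, (x⁰,u⁰,ψ⁰) satisfy the state recursion x⁰(k+1) = f(k,x⁰(k),u⁰(k)), the adjoint recursion ψ⁰(k) = H_x(k,x⁰(k),ψ⁰(k+1),u⁰(k)) with ψ⁰(T) = φ_x(x⁰(T)), and ⟨H_u(k,x⁰(k),ψ⁰(k+1),u⁰(k)), v − u⁰(k)⟩ ≥ 0 for all v ∈ A and each k. Then u⁰ minimizes J(u) := Σ_{k=0}^{T−1} ℓ(k,x(k),u(k)) + φ(x(T)) over all controls u : {0,…,T−1} → A (with states from the recursion and fixed x(0) = x₀). -/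
/-!
Along an admissible pair `(x, u)`, convexity of the Hamiltonian turns the first-order conditions
at `(x⁰, u⁰, ψ⁰)` into
`ℓ(k, x⁰(k), u⁰(k)) - ℓ(k, x(k), u(k)) ≤ ⟪x(k+1) - x⁰(k+1), ψ⁰(k+1)⟫ - ⟪x(k) - x⁰(k), ψ⁰(k)⟫`.
Summing over `k` telescopes (the term at `k = 0` vanishes since `x(0) = x⁰(0)`), and the gradient
inequality for `φ` at `x⁰(T)` absorbs the remaining term at `k = T`. Since only the partial
gradients of `H` in `x` and in `u` are available, the joint gradient inequality for `H` is
obtained from a midpoint argument.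
-/

open RealInnerProductSpace

open Filter Set Topology

theorem ConvexOn.slope_le_sub {𝕜 V : Type*} [Field 𝕜] [LinearOrder 𝕜] [IsStrictOrderedRing 𝕜]
    [AddCommGroup V] [Module 𝕜 V] {s : Set V} {g : V → 𝕜} (hg : ConvexOn 𝕜 s g) {p q : V}
    (hp : p ∈ s) (hq : q ∈ s) {t : 𝕜} (ht₀ : 0 < t) (ht₁ : t ≤ 1) :
    t⁻¹ * (g (p + t • (q - p)) - g p) ≤ g q - g p := by
  have hseg := hg.2 hp hq (sub_nonneg.2 ht₁) ht₀.le (by ring)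
  rw [show (1 - t) • p + t • q = p + t • (q - p) by module] at hseg
  rw [inv_mul_le_iff₀ ht₀]
  simp only [smul_eq_mul] at hseg
  linarith

section

variable {E : Type*} [NormedAddCommGroup E] [InnerProductSpace ℝ E] [CompleteSpace E]

theorem HasGradientAt.tendsto_slope_nhdsGT {g : E → ℝ} {G p : E} (hg : HasGradientAt g G p)
    (v : E) :
    Tendsto (fun t : ℝ => t⁻¹ * (g (p + t • v) - g p)) (𝓝[>] 0) (𝓝 ⟪G, v⟫) := by
  simpa using (hg.hasFDerivAt.hasLineDerivAt v).tendsto_slope_zero_right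

theorem ConvexOn.inner_le_sub_of_hasGradientAt {s : Set E} {g : E → ℝ} (hg : ConvexOn ℝ s g)
    {G p q : E} (hp : p ∈ s) (hq : q ∈ s) (hG : HasGradientAt g G p) :
    ⟪G, q - p⟫ ≤ g q - g p := by
  refine le_of_tendsto (hG.tendsto_slope_nhdsGT (q - p)) ?_
  filter_upwards [Ioc_mem_nhdsGT one_pos] with t ht
  exact hg.slope_le_sub hp hq ht.1 ht.2

theorem ConvexOn.inner_add_inner_le_sub_of_hasGradientAt {F : Type*} [NormedAddCommGroup F]
    [InnerProductSpace ℝ F] [CompleteSpace F] {A : Set F} {H : E → F → ℝ}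
    (hH : ConvexOn ℝ (univ ×ˢ A) (fun p : E × F => H p.1 p.2))
    {x₀ x : E} {u₀ u : F} (hu₀ : u₀ ∈ A) (hu : u ∈ A) {Gx : E} {Gu : F}
    (hGx : HasGradientAt (fun z => H z u₀) Gx x₀) (hGu : HasGradientAt (fun v => H x₀ v) Gu u₀) :
    ⟪Gx, x - x₀⟫ + ⟪Gu, u - u₀⟫ ≤ H x u - H x₀ u₀ := by
  have hp : (x₀, u₀) ∈ univ ×ˢ A := ⟨mem_univ _, hu₀⟩
  have hq : (x, u) ∈ univ ×ˢ A := ⟨mem_univ _, hu⟩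
  have hlim := (hGu.tendsto_slope_nhdsGT (u - u₀)).sub
    ((hGx.tendsto_slope_nhdsGT ((-2 : ℝ) • (x - x₀))).const_mul 2⁻¹)
  rw [inner_smul_right] at hlim
  refine le_of_tendsto (by convert hlim using 2; ring) ?_
  filter_upwards [Ioc_mem_nhdsGT (by norm_num : (0 : ℝ) < 1 / 2)] with t ⟨ht₀, ht₁⟩
  -- `(x₀, u₀ + t • (u - u₀))` is the midpoint of `P`, on the segment towards `(x, u)`, and of a
  -- point moved in `x` only, where the `x`-gradient controls `H`.
  set P := (x₀, u₀) + (2 * t) • ((x, u) - (x₀, u₀)) with hP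
  have hPmem : P ∈ univ ×ˢ A := hH.1.add_smul_sub_mem hp hq ⟨by positivity, by linarith⟩
  have hQmem : (x₀ + t • ((-2 : ℝ) • (x - x₀)), u₀) ∈ univ ×ˢ A := ⟨mem_univ _, hu₀⟩
  have hmid := hH.2 hPmem hQmem (by norm_num : (0 : ℝ) ≤ 2⁻¹) (by norm_num : (0 : ℝ) ≤ 2⁻¹)
    (by norm_num)
  have hmidpt : (2⁻¹ : ℝ) • P + (2⁻¹ : ℝ) • (x₀ + t • ((-2 : ℝ) • (x - x₀)), u₀) =
      (x₀, u₀ + t • (u - u₀)) := by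
    ext <;> simp [hP] <;> module
  have hseg := hH.slope_le_sub hp hq (by positivity : (0 : ℝ) < 2 * t) (by linarith)
  rw [← hP] at hseg
  rw [hmidpt] at hmid
  simp only [smul_eq_mul] at hmid hseg
  calc t⁻¹ * (H x₀ (u₀ + t • (u - u₀)) - H x₀ u₀) -
        2⁻¹ * (t⁻¹ * (H (x₀ + t • (-2 : ℝ) • (x - x₀)) u₀ - H x₀ u₀))
      ≤ (2 * t)⁻¹ * (H P.1 P.2 - H x₀ u₀) := by
        have := mul_le_mul_of_nonneg_left hmid (inv_nonneg.2 ht₀.le)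
        rw [mul_inv]
        linarith
    _ ≤ H x u - H x₀ u₀ := hseg

end

theorem stmt14_general (n d : ℕ) (T : ℕ)
    (A : Set (EuclideanSpace ℝ (Fin d)))
    (x₀ : EuclideanSpace ℝ (Fin n))
    (f : ℕ → EuclideanSpace ℝ (Fin n) → EuclideanSpace ℝ (Fin d) → EuclideanSpace ℝ (Fin n))
    (ℓ : ℕ → EuclideanSpace ℝ (Fin n) → EuclideanSpace ℝ (Fin d) → ℝ)
    (φ : EuclideanSpace ℝ (Fin n) → ℝ)
    (u0 : ℕ → EuclideanSpace ℝ (Fin d)) (hu0A : ∀ k < T, u0 k ∈ A)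
    (x0 ψ0 : ℕ → EuclideanSpace ℝ (Fin n))
    -- state recursion for the candidate optimal pair
    (hx0init : x0 0 = x₀)
    (hx0 : ∀ k < T, x0 (k + 1) = f k (x0 k) (u0 k))
    -- convexity of the Hamiltonian `(x,u) ↦ H(k,x,ψ⁰(k+1),u)` on `ℝⁿ × A`
    (hconvH : ∀ k < T, ConvexOn ℝ (Set.univ ×ˢ A)
      (fun p : EuclideanSpace ℝ (Fin n) × EuclideanSpace ℝ (Fin d) =>
        ⟪f k p.1 p.2, ψ0 (k + 1)⟫ + ℓ k p.1 p.2))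
    -- convexity of the terminal cost
    (hconvφ : ConvexOn ℝ Set.univ φ)
    -- adjoint recursion: `ψ⁰(k)` is the gradient in `x` of `H(k,·,ψ⁰(k+1),u⁰(k))` at `x⁰(k)`
    (hadj : ∀ k < T, HasGradientAt
      (fun z => ⟪f k z (u0 k), ψ0 (k + 1)⟫ + ℓ k z (u0 k)) (ψ0 k) (x0 k))
    -- transversality: `ψ⁰(T) = φ_x(x⁰(T))`
    (hterm : HasGradientAt φ (ψ0 T) (x0 T))
    -- variational inequality in `u`
    (Hu : ℕ → EuclideanSpace ℝ (Fin d))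
    (hHu : ∀ k < T, HasGradientAt
      (fun v => ⟪f k (x0 k) v, ψ0 (k + 1)⟫ + ℓ k (x0 k) v) (Hu k) (u0 k))
    (hineq : ∀ k < T, ∀ v ∈ A, 0 ≤ ⟪Hu k, v - u0 k⟫) :
    ∀ (u : ℕ → EuclideanSpace ℝ (Fin d)) (x : ℕ → EuclideanSpace ℝ (Fin n)),
      (∀ k < T, u k ∈ A) → x 0 = x₀ → (∀ k < T, x (k + 1) = f k (x k) (u k)) →
      (∑ k ∈ Finset.range T, ℓ k (x0 k) (u0 k)) + φ (x0 T) ≤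
        (∑ k ∈ Finset.range T, ℓ k (x k) (u k)) + φ (x T) := by
  intro u x huA hxinit hx
  have hstep : ∀ k ∈ Finset.range T, ℓ k (x0 k) (u0 k) - ℓ k (x k) (u k) ≤
      ⟪x (k + 1) - x0 (k + 1), ψ0 (k + 1)⟫ - ⟪x k - x0 k, ψ0 k⟫ := by
    intro k hk
    rw [Finset.mem_range] at hk
    have hH := (hconvH k hk).inner_add_inner_le_sub_of_hasGradientAt
      (H := fun z v => ⟪f k z v, ψ0 (k + 1)⟫ + ℓ k z v) (x := x k)
      (hu0A k hk) (huA k hk) (hadj k hk) (hHu k hk)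
    rw [← hx k hk, ← hx0 k hk, real_inner_comm] at hH
    linarith [hineq k hk (u k) (huA k hk),
      inner_sub_left (𝕜 := ℝ) (x (k + 1)) (x0 (k + 1)) (ψ0 (k + 1))]
  have htel := Finset.sum_le_sum hstep
  rw [Finset.sum_range_sub (fun k => ⟪x k - x0 k, ψ0 k⟫), Finset.sum_sub_distrib, hxinit,
    hx0init, sub_self, inner_zero_left (𝕜 := ℝ)] at htel
  have hφ := hconvφ.inner_le_sub_of_hasGradientAt (mem_univ _) (mem_univ (x T)) hterm
  rw [real_inner_comm] at hφ
  linarith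

/-- Discrete-time sufficiency of the Pontryagin conditions under convexity.
With `H(k,x,ψ,u) = ⟨f(k,x,u), ψ⟩ + ℓ(k,x,u)`, if `(x,u) ↦ H(k,x,ψ⁰(k+1),u)` is convex,
`φ` is convex, `(x⁰,u⁰,ψ⁰)` satisfy the state recursion, the adjoint recursion
`ψ⁰(k) = H_x(k,x⁰(k),ψ⁰(k+1),u⁰(k))`, `ψ⁰(T) = φ_x(x⁰(T))`, and
`⟨H_u(k,x⁰(k),ψ⁰(k+1),u⁰(k)), v − u⁰(k)⟩ ≥ 0` for all `v ∈ A`, then `u⁰` minimizes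
`J(u) = Σ_{k<T} ℓ(k,x(k),u(k)) + φ(x(T))` over controls valued in `A`. -/
theorem stmt14 (n d : ℕ) (T : ℕ)
    (A : Set (EuclideanSpace ℝ (Fin d))) (hAc : IsClosed A) (hAconv : Convex ℝ A)
    (x₀ : EuclideanSpace ℝ (Fin n))
    (f : ℕ → EuclideanSpace ℝ (Fin n) → EuclideanSpace ℝ (Fin d) → EuclideanSpace ℝ (Fin n))
    (ℓ : ℕ → EuclideanSpace ℝ (Fin n) → EuclideanSpace ℝ (Fin d) → ℝ)
    (φ : EuclideanSpace ℝ (Fin n) → ℝ)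
    (u0 : ℕ → EuclideanSpace ℝ (Fin d)) (hu0A : ∀ k < T, u0 k ∈ A)
    (x0 ψ0 : ℕ → EuclideanSpace ℝ (Fin n))
    -- state recursion for the candidate optimal pair
    (hx0init : x0 0 = x₀)
    (hx0 : ∀ k < T, x0 (k + 1) = f k (x0 k) (u0 k))
    -- convexity of the Hamiltonian `(x,u) ↦ H(k,x,ψ⁰(k+1),u)` on `ℝⁿ × A`
    (hconvH : ∀ k < T, ConvexOn ℝ (Set.univ ×ˢ A)
      (fun p : EuclideanSpace ℝ (Fin n) × EuclideanSpace ℝ (Fin d) =>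
        ⟪f k p.1 p.2, ψ0 (k + 1)⟫ + ℓ k p.1 p.2))
    -- convexity of the terminal cost
    (hconvφ : ConvexOn ℝ Set.univ φ)
    -- adjoint recursion: `ψ⁰(k)` is the gradient in `x` of `H(k,·,ψ⁰(k+1),u⁰(k))` at `x⁰(k)`
    (hadj : ∀ k < T, HasGradientAt
      (fun z => ⟪f k z (u0 k), ψ0 (k + 1)⟫ + ℓ k z (u0 k)) (ψ0 k) (x0 k))
    -- transversality: `ψ⁰(T) = φ_x(x⁰(T))`
    (hterm : HasGradientAt φ (ψ0 T) (x0 T))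
    -- variational inequality in `u`
    (Hu : ℕ → EuclideanSpace ℝ (Fin d))
    (hHu : ∀ k < T, HasGradientAt
      (fun v => ⟪f k (x0 k) v, ψ0 (k + 1)⟫ + ℓ k (x0 k) v) (Hu k) (u0 k))
    (hineq : ∀ k < T, ∀ v ∈ A, 0 ≤ ⟪Hu k, v - u0 k⟫) :
    ∀ (u : ℕ → EuclideanSpace ℝ (Fin d)) (x : ℕ → EuclideanSpace ℝ (Fin n)),
      (∀ k < T, u k ∈ A) → x 0 = x₀ → (∀ k < T, x (k + 1) = f k (x k) (u k)) →
      (∑ k ∈ Finset.range T, ℓ k (x0 k) (u0 k)) + φ (x0 T) ≤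
        (∑ k ∈ Finset.range T, ℓ k (x k) (u k)) + φ (x T) :=
  stmt14_general n d T A x₀ f ℓ φ u0 hu0A x0 ψ0 hx0init hx0 hconvH hconvφ hadj hterm Hu hHu hineq
end
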